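/- arXiv:2309.08147 — 2 statements merged into one kernel-verified Lean document; each statement's English description precedes it below -/
import Mathlib

section
/- Let X be a topological space admitting an open cover (U_i)_{i ∈ I} by irreducible open subsets (i.e., every point of X lies in some U_i and each U_i is irreducible and open). Then for every point x ∈ X, the irreducible component of x coincides with the connected component of x; in particular every connected component of X is irreducible, and the irreducible components of X coincide with its connected components. -/
/-- If a topological space admits an open cover by irreducible open subsets, then for every
point the irreducible component coincides with the connected component; in particular every
connected component is irreducible. -/
theorem irreducibleComponent_eq_connectedComponent_of_cover {X : Type*} [TopologicalSpace X]
    {I : Type*} (U : I → Set X)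
    (hopen : ∀ i, IsOpen (U i)) (hirr : ∀ i, IsIrreducible (U i))
    (hcover : ∀ x : X, ∃ i, x ∈ U i) :
    ∀ x : X, irreducibleComponent x = connectedComponent x ∧
      IsIrreducible (connectedComponent x) := by
  intro x
  -- The irreducible component of any point is open.
  have hTopen : IsOpen (irreducibleComponent x) := by
    rw [isOpen_iff_forall_mem_open]
    intro z hz
    obtain ⟨j, hj⟩ := hcover z
    have hsub : irreducibleComponent x ⊆ closure (U j) :=
      (subset_closure_inter_of_isPreirreducible_of_isOpen
        isIrreducible_irreducibleComponent.2 (hopen j) ⟨z, hz, hj⟩).trans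
        (closure_mono Set.inter_subset_right)
    have heq : closure (U j) = irreducibleComponent x :=
      eq_irreducibleComponent ((hirr j).closure.2) hsub
    exact ⟨U j, heq ▸ subset_closure, hopen j, hj⟩
  have hclopen : IsClopen (irreducibleComponent x) := ⟨isClosed_irreducibleComponent, hTopen⟩
  have hconn : IsConnected (irreducibleComponent x) :=
    isIrreducible_irreducibleComponent.isConnected
  have h1 : irreducibleComponent x ⊆ connectedComponent x :=
    hconn.subset_connectedComponent mem_irreducibleComponent
  have h2 : connectedComponent x ⊆ irreducibleComponent x :=
    hclopen.connectedComponent_subset mem_irreducibleComponent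
  have he : irreducibleComponent x = connectedComponent x := h1.antisymm h2
  exact ⟨he, he ▸ isIrreducible_irreducibleComponent⟩
end

section
/- Let C be an additive category (a category with a zero object and binary biproducts). Call a class S of objects of C 'thick-like' if S is closed under isomorphism, closed under binary biproducts (A, B ∈ S implies A ⊕ B ∈ S), and closed under retracts (direct summands): if A is a retract of B and B ∈ S then A ∈ S. For a class E of objects, set Z(E) := { S thick-like | S ∩ E = ∅ }. Then for any two classes E and F of objects, Z(E) ∪ Z(F) = Z(E ⊕ F), where E ⊕ F := { e ⊕ f | e ∈ E, f ∈ F }. -/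
open CategoryTheory CategoryTheory.Limits

variable {C : Type*} [Category C] [Preadditive C] [HasZeroObject C] [HasBinaryBiproducts C]

/-- A class of objects of an additive category is `thick-like` if it is closed under
isomorphism, under binary biproducts, and under retracts (direct summands). -/
def ThickLike (S : Set C) : Prop :=
  (∀ {A B : C}, (A ≅ B) → A ∈ S → B ∈ S) ∧
  (∀ {A B : C}, A ∈ S → B ∈ S → (A ⊞ B) ∈ S) ∧
  (∀ {A B : C}, (∃ (i : A ⟶ B) (r : B ⟶ A), i ≫ r = 𝟙 A) → B ∈ S → A ∈ S)

/-- For a class `E` of objects, `Z E` is the collection of thick-like classes avoiding `E`. -/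
def Zset (E : Set C) : Set (Set C) :=
  {S : Set C | ThickLike S ∧ S ∩ E = ∅}

/-- The union of two "closed sets" `Z E` and `Z F` is the closed set associated to the class
of biproducts `E ⊕ F = { e ⊞ f | e ∈ E, f ∈ F }`. -/
theorem Zset_union_Zset (E F : Set C) :
    Zset E ∪ Zset F = Zset (Set.image2 (fun e f => e ⊞ f) E F) := by
  ext S
  simp only [Set.mem_union, Zset, Set.mem_setOf_eq, ← Set.not_nonempty_iff_eq_empty]
  constructor
  · rintro (⟨hT, hE⟩ | ⟨hT, hF⟩) <;> refine ⟨‹_›, ?_⟩ <;>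
      rintro ⟨x, hxS, e, he, f, hf, rfl⟩
    · exact hE ⟨e, hT.2.2 ⟨biprod.inl, biprod.fst, biprod.inl_fst⟩ hxS, he⟩
    · exact hF ⟨f, hT.2.2 ⟨biprod.inr, biprod.snd, biprod.inr_snd⟩ hxS, hf⟩
  · rintro ⟨hT, h⟩
    by_cases hE : (S ∩ E).Nonempty
    · right
      refine ⟨hT, ?_⟩
      rintro ⟨f, hfS, hfF⟩
      obtain ⟨e, heS, heE⟩ := hE
      exact h ⟨e ⊞ f, hT.2.1 heS hfS, e, heE, f, hfF, rfl⟩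
    · exact Or.inl ⟨hT, hE⟩
end
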